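/- arXiv:2305.17061 — 6 statements merged into one kernel-verified Lean document; each statement's English description precedes it below -/
import Mathlib

section
/- (Persistence of excitation of a delayed signal, Lemma A(b)) Let X be a real Hilbert space, Y a real normed space, g : ℝ → X continuous, and P : X → Y a bounded linear operator. If the restriction of g to [0,∞) is PE with respect to P, then for every delay d ≥ 0 the delayed signal t ↦ g(t−d), t ∈ [0,∞), is also PE with respect to P. -/
open Set

/-- `g` (restricted to `[0,∞)`) is persistently exciting with respect to the bounded linear
operator `P` with constants `(T, κ)`. -/
def IsPEWith {X : Type*} [NormedAddCommGroup X] [InnerProductSpace ℝ X]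
    {Y : Type*} [NormedAddCommGroup Y] [NormedSpace ℝ Y]
    (g : ℝ → X) (P : X →L[ℝ] Y) (T κ : ℝ) : Prop :=
  0 < T ∧ 0 < κ ∧
    ∀ x : X, ∀ t : ℝ, 0 ≤ t →
      κ * ‖P x‖ ^ 2 ≤ ∫ τ in t..(t + T), (inner ℝ (g τ) x : ℝ) ^ 2

/-- `g` (restricted to `[0,∞)`) is persistently exciting with respect to `P`. -/
def IsPE {X : Type*} [NormedAddCommGroup X] [InnerProductSpace ℝ X]
    {Y : Type*} [NormedAddCommGroup Y] [NormedSpace ℝ Y]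
    (g : ℝ → X) (P : X →L[ℝ] Y) : Prop :=
  ∃ T κ : ℝ, IsPEWith g P T κ

/-! With window `T + d` and the same `κ`: the window `[t, t + T + d]` of the delayed signal is the
window `[t - d, t + T]` of `g`, which contains `[t, t + T]`, and the integrand is nonnegative. -/

theorem IsPEWith.comp_sub_const {X : Type*} [NormedAddCommGroup X] [InnerProductSpace ℝ X]
    {Y : Type*} [NormedAddCommGroup Y] [NormedSpace ℝ Y] {g : ℝ → X} {P : X →L[ℝ] Y}
    {T κ d : ℝ} (h : IsPEWith g P T κ) (hd : 0 ≤ d)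
    (hg : ∀ x : X, MeasureTheory.LocallyIntegrable fun τ => (inner ℝ (g τ) x : ℝ) ^ 2) :
    IsPEWith (fun t => g (t - d)) P (T + d) κ := by
  obtain ⟨hT, hκ, hbound⟩ := h
  refine ⟨by linarith, hκ, fun x t ht => ?_⟩
  calc κ * ‖P x‖ ^ 2 ≤ ∫ τ in t..(t + T), (inner ℝ (g τ) x : ℝ) ^ 2 := hbound x t ht
    _ ≤ ∫ τ in (t - d)..(t + T), (inner ℝ (g τ) x : ℝ) ^ 2 :=
      intervalIntegral.integral_mono_interval (by linarith) (by linarith) le_rfl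
        (.of_forall fun _ => sq_nonneg _)
        ((hg x).integrableOn_isCompact isCompact_uIcc).intervalIntegrable
    _ = ∫ τ in t..(t + (T + d)), (inner ℝ (g (τ - d)) x : ℝ) ^ 2 := by
      rw [intervalIntegral.integral_comp_sub_right (fun τ => (inner ℝ (g τ) x : ℝ) ^ 2)]
      ring_nf

theorem pe_delayed_signal_general
    {X : Type*} [NormedAddCommGroup X] [InnerProductSpace ℝ X]
    {Y : Type*} [NormedAddCommGroup Y] [NormedSpace ℝ Y]
    (g : ℝ → X) (hg : Continuous g)
    (P : X →L[ℝ] Y) (hPE : IsPE g P) :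
    ∀ d : ℝ, 0 ≤ d → IsPE (fun t => g (t - d)) P := by
  intro d hd
  obtain ⟨T, κ, h⟩ := hPE
  exact ⟨T + d, κ, h.comp_sub_const hd fun x => (by fun_prop : Continuous _).locallyIntegrable⟩

/-- **Persistence of excitation of a delayed signal** (Lemma A(b)).
If `g : ℝ → X` is continuous and its restriction to `[0,∞)` is PE with respect to `P`, then
for every delay `d ≥ 0` the delayed signal `t ↦ g (t - d)` is also PE with respect to `P`. -/
theorem pe_delayed_signal
    {X : Type*} [NormedAddCommGroup X] [InnerProductSpace ℝ X] [CompleteSpace X]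
    {Y : Type*} [NormedAddCommGroup Y] [NormedSpace ℝ Y]
    (g : ℝ → X) (hg : Continuous g)
    (P : X →L[ℝ] Y) (hPE : IsPE g P) :
    ∀ d : ℝ, 0 ≤ d → IsPE (fun t => g (t - d)) P :=
  pe_delayed_signal_general g hg P hPE
end

section
/- (Existence of bounded PE signals with prescribed constants, Lemma A(d), second part) Let X be a finite-dimensional real inner product space and let T, κ, M be positive constants with M ≥ √(2·κ·(dim X)/T). Then there exists a continuously differentiable signal g : [0,∞) → X with ‖g(t)‖ ≤ M for all t ≥ 0 that is PE with respect to the identity operator Id_X with constants (T,κ). (One such signal is g(τ) = √(2κ/T) · Σ_{ℓ=1}^{dim X} sin(2ℓπτ/T) e_ℓ for an orthonormal basis (e_ℓ) of X.) -/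
/-!
Take `g τ = c ∑ₗ sin (2π(ℓ+1)τ/T) eₗ` for an orthonormal basis `(eₗ)` and `c = √(2κ/T)`.
The sines are orthogonal on every window of length `T`, each with squared `L²` norm `T/2`, so
by Parseval `∫ₜ^{t+T} ⟪g τ, x⟫² dτ = c²T/2 · ‖x‖² = κ‖x‖²` exactly, while
`‖g τ‖² ≤ (dim X) c² = 2κ (dim X)/T ≤ M²`.
-/

open Real intervalIntegral
open scoped RealInnerProductSpace

lemma integral_cos_two_pi_int_mul_div_eq_zero {T : ℝ} (hT : T ≠ 0) {k : ℤ} (hk : k ≠ 0)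
    (t : ℝ) : ∫ τ in t..t + T, cos (2 * π * k / T * τ) = 0 := by
  have hω : 2 * π * k / T ≠ 0 := by
    have : (k : ℝ) ≠ 0 := Int.cast_ne_zero.mpr hk
    positivity
  have hperiod : 2 * π * k / T * (t + T) = 2 * π * k / T * t + k * (2 * π) := by
    field_simp
  rw [integral_comp_mul_left (fun τ => cos τ) hω, integral_cos, hperiod,
    sin_add_int_mul_two_pi, sub_self, smul_zero]

lemma integral_sin_mul_sin_eq {T : ℝ} (hT : T ≠ 0) (p q : ℕ) (t : ℝ) :
    ∫ τ in t..t + T, sin (2 * π * (p + 1) / T * τ) * sin (2 * π * (q + 1) / T * τ) =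
      if p = q then T / 2 else 0 := by
  have hprod : ∀ τ, sin (2 * π * (p + 1) / T * τ) * sin (2 * π * (q + 1) / T * τ) =
      (cos (2 * π * ((p - q : ℤ) : ℝ) / T * τ) -
        cos (2 * π * ((p + q + 2 : ℤ) : ℝ) / T * τ)) / 2 := by
    intro τ
    rw [eq_div_iff two_ne_zero, mul_comm, ← mul_assoc, two_mul_sin_mul_sin]
    push_cast
    ring_nf
  have hcos : ∀ k : ℤ,
      IntervalIntegrable (fun τ => cos (2 * π * k / T * τ)) MeasureTheory.volume t (t + T) :=
    fun k => by apply Continuous.intervalIntegrable; fun_prop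
  simp_rw [hprod]
  rw [integral_div, integral_sub (hcos _) (hcos _),
    integral_cos_two_pi_int_mul_div_eq_zero hT (k := p + q + 2) (by omega)]
  split_ifs with hpq
  · simp [hpq]
  · rw [integral_cos_two_pi_int_mul_div_eq_zero hT (k := p - q) (by omega)]
    norm_num

namespace OrthonormalBasis

variable {ι X : Type*} [Fintype ι] [NormedAddCommGroup X] [InnerProductSpace ℝ X]

lemma norm_sum_smul_sq (b : OrthonormalBasis ι ℝ X) (v : ι → ℝ) :
    ‖∑ i, v i • b i‖ ^ 2 = ∑ i, v i ^ 2 := by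
  rw [← real_inner_self_eq_norm_sq, b.orthonormal.inner_sum]
  simp [sq]

lemma integral_inner_sum_smul_sq (b : OrthonormalBasis ι ℝ X) {f : ι → ℝ → ℝ}
    (hf : ∀ i, Continuous (f i)) {t₁ t₂ C : ℝ}
    (horth : Pairwise fun i j => ∫ τ in t₁..t₂, f i τ * f j τ = 0)
    (hdiag : ∀ i, ∫ τ in t₁..t₂, f i τ * f i τ = C) (x : X) :
    ∫ τ in t₁..t₂, ⟪∑ i, f i τ • b i, x⟫ ^ 2 = C * ‖x‖ ^ 2 := by
  have hexpand : ∀ τ, ⟪∑ i, f i τ • b i, x⟫ ^ 2 =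
      ∑ i, ∑ j, ⟪b i, x⟫ * ⟪b j, x⟫ * (f i τ * f j τ) := by
    intro τ
    simp_rw [sum_inner, real_inner_smul_left, sq, Finset.sum_mul_sum]
    exact Finset.sum_congr rfl fun i _ => Finset.sum_congr rfl fun j _ => by ring
  have hcont : ∀ i j, Continuous fun τ => ⟪b i, x⟫ * ⟪b j, x⟫ * (f i τ * f j τ) :=
    fun i j => by fun_prop
  simp_rw [hexpand]
  rw [integral_finsetSum fun i _ =>
    (continuous_finsetSum _ fun j _ => hcont i j).intervalIntegrable _ _]
  simp_rw [integral_finsetSum fun j _ => (hcont _ j).intervalIntegrable _ _,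
    integral_const_mul]
  calc ∑ i, ∑ j, ⟪b i, x⟫ * ⟪b j, x⟫ * ∫ τ in t₁..t₂, f i τ * f j τ
      = ∑ i, C * ⟪b i, x⟫ ^ 2 := by
        refine Finset.sum_congr rfl fun i _ => ?_
        rw [Finset.sum_eq_single i (fun j _ hji => by rw [horth hji.symm, mul_zero]) (by simp),
          hdiag]
        ring
    _ = C * ‖x‖ ^ 2 := by rw [← Finset.mul_sum, b.sum_sq_inner_right]

end OrthonormalBasis

section SineSignal

variable {X : Type*} [NormedAddCommGroup X] [InnerProductSpace ℝ X] {n : ℕ}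

noncomputable def sineSignal (b : OrthonormalBasis (Fin n) ℝ X) (T c τ : ℝ) : X :=
  ∑ ℓ : Fin n, (c * sin (2 * π * ((ℓ : ℕ) + 1) / T * τ)) • b ℓ

lemma contDiff_sineSignal (b : OrthonormalBasis (Fin n) ℝ X) (T c : ℝ) {k : WithTop ℕ∞} :
    ContDiff ℝ k (sineSignal b T c) := by
  unfold sineSignal
  fun_prop

lemma norm_sineSignal_le (b : OrthonormalBasis (Fin n) ℝ X) (T c τ : ℝ) :
    ‖sineSignal b T c τ‖ ≤ √(n * c ^ 2) := by
  apply Real.le_sqrt_of_sq_le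
  rw [sineSignal, b.norm_sum_smul_sq]
  calc ∑ ℓ : Fin n, (c * sin (2 * π * ((ℓ : ℕ) + 1) / T * τ)) ^ 2
      ≤ ∑ _ℓ : Fin n, c ^ 2 := Finset.sum_le_sum fun ℓ _ => by
        rw [mul_pow]
        exact mul_le_of_le_one_right (sq_nonneg c) (sin_sq_le_one _)
    _ = n * c ^ 2 := by simp

lemma integral_inner_sineSignal_sq (b : OrthonormalBasis (Fin n) ℝ X) {T : ℝ} (hT : T ≠ 0)
    (c : ℝ) (x : X) (t : ℝ) :
    ∫ τ in t..t + T, ⟪sineSignal b T c τ, x⟫ ^ 2 = c ^ 2 * T / 2 * ‖x‖ ^ 2 := by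
  have hsin : ∀ ℓ m : Fin n, ∫ τ in t..t + T,
      c * sin (2 * π * ((ℓ : ℕ) + 1) / T * τ) * (c * sin (2 * π * ((m : ℕ) + 1) / T * τ)) =
        if ℓ = m then c ^ 2 * T / 2 else 0 := by
    intro ℓ m
    simp_rw [mul_mul_mul_comm c, integral_const_mul, integral_sin_mul_sin_eq hT, Fin.val_inj]
    split_ifs <;> ring
  refine b.integral_inner_sum_smul_sq (fun ℓ => by fun_prop) (fun ℓ m hℓm => ?_) (fun ℓ => ?_) x
  · simpa [hℓm] using hsin ℓ m
  · simpa using hsin ℓ ℓ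

end SineSignal

theorem exists_bounded_pe_signal_general
    {X : Type*} [NormedAddCommGroup X] [InnerProductSpace ℝ X] [FiniteDimensional ℝ X]
    (T κ M : ℝ) (hT : 0 < T) (hκ : 0 < κ)
    (hMbig : Real.sqrt (2 * κ * (Module.finrank ℝ X) / T) ≤ M) :
    ∃ g : ℝ → X, ContDiff ℝ 1 g ∧ (∀ t : ℝ, 0 ≤ t → ‖g t‖ ≤ M) ∧
      ∀ x : X, ∀ t : ℝ, 0 ≤ t →
        κ * ‖x‖ ^ 2 ≤ ∫ τ in t..(t + T), (inner ℝ (g τ) x : ℝ) ^ 2 := by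
  set c := √(2 * κ / T)
  have hc : c ^ 2 = 2 * κ / T := Real.sq_sqrt (by positivity)
  refine ⟨sineSignal (stdOrthonormalBasis ℝ X) T c, contDiff_sineSignal _ T c,
    fun t _ => ?_, fun x t _ => ?_⟩
  · calc ‖sineSignal (stdOrthonormalBasis ℝ X) T c t‖
        ≤ √(Module.finrank ℝ X * c ^ 2) := norm_sineSignal_le _ T c t
      _ = √(2 * κ * Module.finrank ℝ X / T) := by rw [hc]; ring_nf
      _ ≤ M := hMbig
  · rw [integral_inner_sineSignal_sq _ hT.ne', hc]
    apply le_of_eq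
    field_simp

/-- **Existence of bounded PE signals with prescribed constants** (Lemma A(d), second part).
Let `X` be a finite-dimensional real inner product space and `T, κ, M > 0` with
`M ≥ √(2·κ·(dim X)/T)`. Then there exists a continuously differentiable signal
`g : [0,∞) → X` bounded by `M` that is PE with respect to the identity `Id_X` with
constants `(T, κ)`. -/
theorem exists_bounded_pe_signal
    {X : Type*} [NormedAddCommGroup X] [InnerProductSpace ℝ X] [FiniteDimensional ℝ X]
    (T κ M : ℝ) (hT : 0 < T) (hκ : 0 < κ) (hM : 0 < M)
    (hMbig : Real.sqrt (2 * κ * (Module.finrank ℝ X) / T) ≤ M) :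
    ∃ g : ℝ → X, ContDiff ℝ 1 g ∧ (∀ t : ℝ, 0 ≤ t → ‖g t‖ ≤ M) ∧
      ∀ x : X, ∀ t : ℝ, 0 ≤ t →
        κ * ‖x‖ ^ 2 ≤ ∫ τ in t..(t + T), (inner ℝ (g τ) x : ℝ) ^ 2 :=
  exists_bounded_pe_signal_general T κ M hT hκ hMbig
end

section
/- (Persistence of excitation is robust to vanishing perturbations, Lemma A(e)) Let X be a finite-dimensional real inner product space, g : [0,∞) → X a bounded continuous signal that is PE with respect to the identity operator Id_X, and δ : [0,∞) → X a continuous signal with ‖δ(t)‖ → 0 as t → ∞. Then the signal g + δ is also PE with respect to Id_X. -/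
/-!
Pointwise `⟪g, x⟫² ≤ 2 ⟪g + δ, x⟫² + 2 ⟪δ, x⟫²`. After a time `t₁` beyond which
`‖δ‖² < κ / (4T)`, integrating over a window of length `T` gives
`κ ‖x‖² ≤ 2 ∫ ⟪g + δ, x⟫² + κ ‖x‖² / 2`, i.e. the PE inequality for `g + δ` with constant `κ / 4`.
Every window of length `t₁ + T` in `[0, ∞)` contains a window of length `T` starting after `t₁`.
-/

open Set Filter

/-- `g` (restricted to `[0,∞)`) is persistently exciting with respect to the identity
operator on `X`. -/
def IsPEId {X : Type*} [NormedAddCommGroup X] [InnerProductSpace ℝ X] (g : ℝ → X) : Prop :=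
  ∃ T κ : ℝ, 0 < T ∧ 0 < κ ∧
    ∀ x : X, ∀ t : ℝ, 0 ≤ t →
      κ * ‖x‖ ^ 2 ≤ ∫ τ in t..(t + T), (inner ℝ (g τ) x : ℝ) ^ 2

open MeasureTheory
open scoped InnerProductSpace Interval

section InnerSquare

variable {X : Type*} [NormedAddCommGroup X] [InnerProductSpace ℝ X]

theorem ContinuousOn.intervalIntegrable_inner_sq {g : ℝ → X} {a b : ℝ}
    (hg : ContinuousOn g (uIcc a b)) (x : X) :
    IntervalIntegrable (fun τ => ⟪g τ, x⟫_ℝ ^ 2) volume a b :=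
  ((hg.inner continuousOn_const).pow 2).intervalIntegrable

theorem integral_inner_sq_le_of_norm_sq_le {δ : ℝ → X} {a b C : ℝ} (hab : a ≤ b)
    (hδ : ∀ τ ∈ Ioc a b, ‖δ τ‖ ^ 2 ≤ C) (x : X) :
    ∫ τ in a..b, ⟪δ τ, x⟫_ℝ ^ 2 ≤ (b - a) * (C * ‖x‖ ^ 2) := by
  have hpoint : ∀ τ ∈ Ι a b, ‖⟪δ τ, x⟫_ℝ ^ 2‖ ≤ C * ‖x‖ ^ 2 := fun τ hτ =>
    calc ‖⟪δ τ, x⟫_ℝ ^ 2‖ = |⟪δ τ, x⟫_ℝ| ^ 2 := by rw [norm_pow, Real.norm_eq_abs]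
      _ ≤ (‖δ τ‖ * ‖x‖) ^ 2 := by gcongr; exact abs_real_inner_le_norm _ _
      _ = ‖δ τ‖ ^ 2 * ‖x‖ ^ 2 := mul_pow _ _ _
      _ ≤ C * ‖x‖ ^ 2 := by gcongr; exact hδ τ (uIoc_of_le hab ▸ hτ)
  calc ∫ τ in a..b, ⟪δ τ, x⟫_ℝ ^ 2
      ≤ ‖∫ τ in a..b, ⟪δ τ, x⟫_ℝ ^ 2‖ := Real.le_norm_self _
    _ ≤ C * ‖x‖ ^ 2 * |b - a| := intervalIntegral.norm_integral_le_of_norm_le_const hpoint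
    _ = (b - a) * (C * ‖x‖ ^ 2) := by rw [abs_of_nonneg (sub_nonneg.2 hab), mul_comm]

theorem integral_inner_sq_le_two_mul_add {g δ : ℝ → X} {a b : ℝ} (hab : a ≤ b)
    (hg : ContinuousOn g (uIcc a b)) (hδ : ContinuousOn δ (uIcc a b)) (x : X) :
    ∫ τ in a..b, ⟪g τ, x⟫_ℝ ^ 2 ≤
      2 * (∫ τ in a..b, ⟪g τ + δ τ, x⟫_ℝ ^ 2) + 2 * ∫ τ in a..b, ⟪δ τ, x⟫_ℝ ^ 2 := by
  have hgδ : IntervalIntegrable (fun τ => ⟪g τ + δ τ, x⟫_ℝ ^ 2) volume a b :=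
    (hg.add hδ).intervalIntegrable_inner_sq x
  have hδ' := hδ.intervalIntegrable_inner_sq x
  calc ∫ τ in a..b, ⟪g τ, x⟫_ℝ ^ 2
      ≤ ∫ τ in a..b, (2 * ⟪g τ + δ τ, x⟫_ℝ ^ 2 + 2 * ⟪δ τ, x⟫_ℝ ^ 2) :=
        intervalIntegral.integral_mono_on hab (hg.intervalIntegrable_inner_sq x)
          ((hgδ.const_mul 2).add (hδ'.const_mul 2)) fun τ _ => by
            rw [inner_add_left]
            nlinarith [sq_nonneg (⟪g τ, x⟫_ℝ + 2 * ⟪δ τ, x⟫_ℝ)]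
    _ = 2 * (∫ τ in a..b, ⟪g τ + δ τ, x⟫_ℝ ^ 2) + 2 * ∫ τ in a..b, ⟪δ τ, x⟫_ℝ ^ 2 := by
      rw [intervalIntegral.integral_add (hgδ.const_mul 2) (hδ'.const_mul 2),
        intervalIntegral.integral_const_mul, intervalIntegral.integral_const_mul]

theorem isPEId_of_forall_ge {g : ℝ → X} (hg : ContinuousOn g (Ici 0)) {t₁ T κ : ℝ}
    (ht₁ : 0 ≤ t₁) (hT : 0 < T) (hκ : 0 < κ)
    (h : ∀ x : X, ∀ t, t₁ ≤ t → κ * ‖x‖ ^ 2 ≤ ∫ τ in t..(t + T), ⟪g τ, x⟫_ℝ ^ 2) :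
    IsPEId g := by
  refine ⟨t₁ + T, κ, by positivity, hκ, fun x t ht => ?_⟩
  set s := max t t₁
  have hs_le : s ≤ t + t₁ := max_le (by linarith) (by linarith)
  have hcont : ContinuousOn g (uIcc t (t + (t₁ + T))) :=
    hg.mono fun τ hτ => (le_min ht (by linarith : 0 ≤ t + (t₁ + T))).trans hτ.1
  calc κ * ‖x‖ ^ 2 ≤ ∫ τ in s..(s + T), ⟪g τ, x⟫_ℝ ^ 2 := h x s (le_max_right t t₁)
    _ ≤ ∫ τ in t..(t + (t₁ + T)), ⟪g τ, x⟫_ℝ ^ 2 :=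
      intervalIntegral.integral_mono_interval (le_max_left t t₁) (by linarith) (by linarith)
        (.of_forall fun τ => sq_nonneg _) (hcont.intervalIntegrable_inner_sq x)

end InnerSquare

theorem pe_robust_to_vanishing_perturbation_general
    {X : Type*} [NormedAddCommGroup X] [InnerProductSpace ℝ X]
    (g δ : ℝ → X) (hg : ContinuousOn g (Ici 0)) (hδ : ContinuousOn δ (Ici 0))
    (hδ0 : Tendsto (fun t => ‖δ t‖) atTop (nhds 0))
    (hPE : IsPEId g) :
    IsPEId (fun t => g t + δ t) := by
  obtain ⟨T, κ, hT, hκ, hPE⟩ := hPE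
  have hδsq : Tendsto (fun t => ‖δ t‖ ^ 2) atTop (nhds 0) := by simpa using hδ0.pow 2
  obtain ⟨t₀, hsmall⟩ := eventually_atTop.mp <|
    hδsq.eventually (gt_mem_nhds (by positivity : 0 < κ / (4 * T)))
  refine isPEId_of_forall_ge (hg.add hδ) (le_max_right t₀ 0) hT (by positivity : 0 < κ / 4)
    fun x t ht => ?_
  have ht0 : 0 ≤ t := (le_max_right t₀ 0).trans ht
  have hwindow : uIcc t (t + T) ⊆ Ici 0 := fun τ hτ => (le_min ht0 (by linarith)).trans hτ.1
  have hsplit := integral_inner_sq_le_two_mul_add (by linarith) (hg.mono hwindow)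
    (hδ.mono hwindow) x
  have hδint := integral_inner_sq_le_of_norm_sq_le (by linarith : t ≤ t + T)
    (fun τ hτ => (hsmall τ ((le_max_left t₀ 0).trans (ht.trans hτ.1.le))).le) x
  have hTκ : (t + T - t) * (κ / (4 * T) * ‖x‖ ^ 2) = κ / 4 * ‖x‖ ^ 2 := by field_simp; ring
  linarith [hPE x t ht0]

/-- **Persistence of excitation is robust to vanishing perturbations** (Lemma A(e)).
Let `X` be a finite-dimensional real inner product space, `g : [0,∞) → X` a bounded
continuous signal that is PE with respect to `Id_X`, and `δ : [0,∞) → X` a continuous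
signal with `‖δ(t)‖ → 0` as `t → ∞`. Then `g + δ` is also PE with respect to `Id_X`. -/
theorem pe_robust_to_vanishing_perturbation
    {X : Type*} [NormedAddCommGroup X] [InnerProductSpace ℝ X] [FiniteDimensional ℝ X]
    (g δ : ℝ → X) (hg : ContinuousOn g (Ici 0)) (hδ : ContinuousOn δ (Ici 0))
    (hgb : ∃ M : ℝ, ∀ t : ℝ, 0 ≤ t → ‖g t‖ ≤ M)
    (hδ0 : Tendsto (fun t => ‖δ t‖) atTop (nhds 0))
    (hPE : IsPEId g) :
    IsPEId (fun t => g t + δ t) :=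
  pe_robust_to_vanishing_perturbation_general g δ hg hδ hδ0 hPE
end

section
/- (First-order low-pass filtering preserves persistence of excitation, Lemma A(f)) Let X be a finite-dimensional real inner product space, μ > 0, and g : [0,∞) → X a continuously differentiable signal that is bounded, has bounded derivative, and is PE with respect to the identity operator Id_X. Then every continuously differentiable solution z : [0,∞) → X of the ordinary differential equation dz/dt(t) = −μ z(t) + g(t) for all t ≥ 0 is also PE with respect to Id_X. -/
open Set Filter

theorem mul_sub_le_image_sub_of_le_hasDerivWithinAt {f f' : ℝ → ℝ} {s : Set ℝ} {a b m : ℝ}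
    (hf : ∀ t ∈ s, HasDerivWithinAt f (f' t) s t) (hab : a ≤ b) (hs : Icc a b ⊆ s)
    (hm : ∀ t ∈ Icc a b, m ≤ f' t) : m * (b - a) ≤ f b - f a := by
  have hmono : MonotoneOn (fun t => f t - m * t) (Icc a b) := by
    refine monotoneOn_of_hasDerivWithinAt_nonneg (convex_Icc a b) (f' := fun t => f' t - m)
      (fun t ht => (((hf t (hs ht)).continuousWithinAt).mono hs).sub
        (continuousWithinAt_const.mul continuousWithinAt_id)) (fun t ht => ?_) (fun t ht => ?_)
    · rw [interior_Icc] at ht ⊢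
      have hIoo : Ioo a b ⊆ s := Ioo_subset_Icc_self.trans hs
      simpa using ((hf t (hIoo ht)).mono hIoo).fun_sub
        ((hasDerivAt_id t).const_mul m).hasDerivWithinAt
    · rw [interior_Icc] at ht
      exact sub_nonneg.2 (hm t (Ioo_subset_Icc_self ht))
  have := hmono (left_mem_Icc.2 hab) (right_mem_Icc.2 hab) hab
  dsimp only at this
  linarith

theorem abs_image_sub_le_of_abs_hasDerivWithinAt_le {f f' : ℝ → ℝ} {C x y : ℝ}
    (hf : ∀ t, 0 ≤ t → HasDerivWithinAt f (f' t) (Ici 0) t) (hC : ∀ t, 0 ≤ t → |f' t| ≤ C)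
    (hx : 0 ≤ x) (hy : 0 ≤ y) : |f y - f x| ≤ C * |y - x| :=
  (convex_Ici 0).norm_image_sub_le_of_norm_hasDerivWithin_le hf hC hx hy

theorem exists_lt_of_mul_lt_integral {f : ℝ → ℝ} {t T m : ℝ} (hT : 0 ≤ T)
    (hf : IntervalIntegrable f MeasureTheory.volume t (t + T))
    (h : m * T < ∫ τ in t..(t + T), f τ) : ∃ a ∈ Icc t (t + T), m < f a := by
  by_contra! hle
  have := intervalIntegral.integral_mono_on (by linarith) hf intervalIntegrable_const hle
  rw [intervalIntegral.integral_const, smul_eq_mul, add_sub_cancel_left] at this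
  linarith

theorem exists_sqrt_le_abs_of_le_integral_sq {f : ℝ → ℝ} {t T κ : ℝ} (hT : 0 < T) (hκ : 0 < κ)
    (hf : IntervalIntegrable (fun τ => f τ ^ 2) MeasureTheory.volume t (t + T))
    (hκf : κ ≤ ∫ τ in t..(t + T), f τ ^ 2) : ∃ a ∈ Icc t (t + T), √(κ / (2 * T)) ≤ |f a| := by
  have hlt : κ / (2 * T) * T < ∫ τ in t..(t + T), f τ ^ 2 := by
    rw [div_mul_eq_mul_div, mul_div_mul_right _ _ hT.ne']
    linarith
  obtain ⟨a, ha, hfa⟩ := exists_lt_of_mul_lt_integral hT.le hf hlt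
  exact ⟨a, ha, by simpa [Real.sqrt_sq_eq_abs] using Real.sqrt_le_sqrt hfa.le⟩

theorem mul_le_integral_of_le_on_Icc {f : ℝ → ℝ} {t T s ρ m : ℝ} (hf₀ : ∀ τ, 0 ≤ f τ)
    (hf : IntervalIntegrable f MeasureTheory.volume t (t + T)) (hts : t ≤ s) (hρ : 0 ≤ ρ)
    (hsT : s + ρ ≤ t + T) (hm : ∀ τ ∈ Icc s (s + ρ), m ≤ f τ) :
    m * ρ ≤ ∫ τ in t..(t + T), f τ := by
  have hsub : ∫ τ in s..(s + ρ), f τ ≤ ∫ τ in t..(t + T), f τ :=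
    intervalIntegral.integral_mono_interval hts (by linarith) hsT
      (Eventually.of_forall hf₀) hf
  have hIcc : uIcc s (s + ρ) ⊆ uIcc t (t + T) := by
    rw [uIcc_of_le (by linarith), uIcc_of_le (by linarith)]
    exact Icc_subset_Icc hts hsT
  have hconst := intervalIntegral.integral_mono_on (by linarith) intervalIntegrable_const
    (hf.mono_set hIcc) hm
  rw [intervalIntegral.integral_const, smul_eq_mul, add_sub_cancel_left] at hconst
  linarith

theorem exists_pos_bound_on_Ici {E : Type*} [SeminormedAddCommGroup E] {f : ℝ → E}
    (hf : ∃ M : ℝ, ∀ t : ℝ, 0 ≤ t → ‖f t‖ ≤ M) : ∃ M : ℝ, 0 < M ∧ ∀ t : ℝ, 0 ≤ t → ‖f t‖ ≤ M :=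
  let ⟨M, hM⟩ := hf
  ⟨max M 1, by positivity, fun t ht => (hM t ht).trans (le_max_left _ _)⟩

def IsLowPassSolution (μ : ℝ) (ψ φ : ℝ → ℝ) : Prop :=
  ∀ t, 0 ≤ t → HasDerivWithinAt φ (-μ * φ t + ψ t) (Ici 0) t

namespace IsLowPassSolution

variable {μ : ℝ} {ψ φ : ℝ → ℝ}

theorem neg (hφ : IsLowPassSolution μ ψ φ) : IsLowPassSolution μ (-ψ) (-φ) := fun t ht => by
  refine (hφ t ht).neg.congr_deriv ?_
  simp only [Pi.neg_apply]
  ring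

-- `exp (μ t) (φ t - M / μ)` is antitone, since its derivative is `exp (μ t) (ψ t - M)`.
theorem le_max (hφ : IsLowPassSolution μ ψ φ) (hμ : 0 < μ) {M : ℝ} (hψ : ∀ t, 0 ≤ t → ψ t ≤ M)
    {t : ℝ} (ht : 0 ≤ t) : φ t ≤ max (φ 0) (M / μ) := by
  set w : ℝ → ℝ := fun τ => Real.exp (μ * τ) * (φ τ - M / μ)
  have hw : ∀ τ, 0 ≤ τ →
      HasDerivWithinAt w (Real.exp (μ * τ) * (ψ τ - M)) (Ici 0) τ := fun τ hτ => by
    have hexp := ((hasDerivAt_id τ).const_mul μ).exp.hasDerivWithinAt (s := Ici 0)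
    refine (hexp.fun_mul ((hφ τ hτ).sub_const (M / μ))).congr_deriv ?_
    simp only [id]
    field_simp
    ring
  have hanti : AntitoneOn w (Ici 0) := by
    refine antitoneOn_of_hasDerivWithinAt_nonpos (convex_Ici 0)
      (f' := fun τ => Real.exp (μ * τ) * (ψ τ - M))
      (fun τ hτ => (hw τ hτ).continuousWithinAt) (fun τ hτ => ?_) (fun τ hτ => ?_)
    · rw [interior_Ici] at hτ ⊢
      exact (hw τ (le_of_lt hτ)).mono Ioi_subset_Ici_self
    · rw [interior_Ici] at hτ
      exact mul_nonpos_of_nonneg_of_nonpos (Real.exp_pos _).le (sub_nonpos.2 (hψ τ hτ.le))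
  have hwt : w t ≤ w 0 := hanti self_mem_Ici ht ht
  simp only [w, mul_zero, Real.exp_zero, one_mul] at hwt
  have hexp : 1 ≤ Real.exp (μ * t) := Real.one_le_exp (by positivity)
  rcases le_total (φ t) (M / μ) with h | h
  · exact h.trans (le_max_right _ _)
  · exact le_max_of_le_left (by nlinarith)

theorem abs_le_max (hφ : IsLowPassSolution μ ψ φ) (hμ : 0 < μ) {M : ℝ}
    (hψ : ∀ t, 0 ≤ t → |ψ t| ≤ M) {t : ℝ} (ht : 0 ≤ t) : |φ t| ≤ max |φ 0| (M / μ) := by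
  have hup := hφ.le_max hμ (fun τ hτ => (le_abs_self _).trans (hψ τ hτ)) ht
  have hlow := hφ.neg.le_max hμ (fun τ hτ => (neg_le_abs _).trans (hψ τ hτ)) ht
  simp only [Pi.neg_apply] at hlow
  rw [abs_le]
  constructor
  · linarith [max_le_max_right (M / μ) (neg_le_abs (φ 0))]
  · linarith [max_le_max_right (M / μ) (le_abs_self (φ 0))]

theorem exists_le_abs_of_le_on_Icc (hφ : IsLowPassSolution μ ψ φ) (hμ : 0 ≤ μ) {a b m ε : ℝ}
    (ha : 0 ≤ a) (hab : a ≤ b) (hψ : ∀ τ ∈ Icc a b, m ≤ ψ τ)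
    (h : 2 * ε < (m - μ * ε) * (b - a)) : ∃ s ∈ Icc a b, ε ≤ |φ s| := by
  by_contra! hsmall
  have hincr := mul_sub_le_image_sub_of_le_hasDerivWithinAt hφ hab
    (fun τ hτ => ha.trans hτ.1) (m := m - μ * ε) fun τ hτ => by
      nlinarith [abs_lt.1 (hsmall τ hτ), hψ τ hτ]
  linarith [abs_lt.1 (hsmall a (left_mem_Icc.2 hab)), abs_lt.1 (hsmall b (right_mem_Icc.2 hab))]

theorem exists_le_abs_of_le_abs (hφ : IsLowPassSolution μ ψ φ) (hμ : 0 ≤ μ) {a δ c ε : ℝ}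
    (ha : 0 ≤ a) (hδ : 0 ≤ δ) (hψ : ∀ τ ∈ Icc a (a + δ), |ψ τ - ψ a| ≤ c / 2)
    (hc : c ≤ |ψ a|) (hε : 2 * ε < (c / 2 - μ * ε) * δ) :
    ∃ s ∈ Icc a (a + δ), ε ≤ |φ s| := by
  have h : 2 * ε < (c / 2 - μ * ε) * (a + δ - a) := by rwa [add_sub_cancel_left]
  rcases le_abs'.1 hc with hneg | hpos
  · obtain ⟨s, hs, hεs⟩ := hφ.neg.exists_le_abs_of_le_on_Icc hμ ha (by linarith) (fun τ hτ => by
      linarith [(abs_le.1 (hψ τ hτ)).2, show (-ψ) τ = -ψ τ from rfl]) h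
    exact ⟨s, hs, by rwa [Pi.neg_apply, abs_neg] at hεs⟩
  · exact hφ.exists_le_abs_of_le_on_Icc hμ ha (by linarith)
      (fun τ hτ => by linarith [(abs_le.1 (hψ τ hτ)).1]) h

theorem continuousOn (hφ : IsLowPassSolution μ ψ φ) : ContinuousOn φ (Ici 0) :=
  fun t ht => (hφ t ht).continuousWithinAt

theorem abs_sub_le (hφ : IsLowPassSolution μ ψ φ) (hμ : 0 ≤ μ) {B M : ℝ}
    (hφB : ∀ t, 0 ≤ t → |φ t| ≤ B) (hψM : ∀ t, 0 ≤ t → |ψ t| ≤ M) {x y : ℝ} (hx : 0 ≤ x)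
    (hy : 0 ≤ y) : |φ y - φ x| ≤ (μ * B + M) * |y - x| := by
  refine abs_image_sub_le_of_abs_hasDerivWithinAt_le hφ (fun t ht => ?_) hx hy
  calc |-μ * φ t + ψ t| ≤ |-μ * φ t| + |ψ t| := abs_add_le _ _
    _ = μ * |φ t| + |ψ t| := by rw [abs_mul, abs_neg, abs_of_nonneg hμ]
    _ ≤ μ * B + M := by gcongr <;> [exact hφB t ht; exact hψM t ht]

theorem mul_le_integral_sq (hφ : IsLowPassSolution μ ψ φ) (hμ : 0 ≤ μ) {B M ε ρ s t T : ℝ}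
    (hφB : ∀ t, 0 ≤ t → |φ t| ≤ B) (hψM : ∀ t, 0 ≤ t → |ψ t| ≤ M) (hρ : 0 ≤ ρ)
    (hρε : (μ * B + M) * ρ ≤ ε / 2) (hεs : ε ≤ |φ s|) (ht : 0 ≤ t) (hts : t ≤ s)
    (hsT : s + ρ ≤ t + T) : (ε / 2) ^ 2 * ρ ≤ ∫ τ in t..(t + T), φ τ ^ 2 := by
  have hs : 0 ≤ s := ht.trans hts
  have hL : 0 ≤ μ * B + M := add_nonneg (mul_nonneg hμ ((abs_nonneg _).trans (hφB 0 le_rfl)))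
    ((abs_nonneg _).trans (hψM 0 le_rfl))
  have hnear : ∀ τ ∈ Icc s (s + ρ), (ε / 2) ^ 2 ≤ φ τ ^ 2 := fun τ hτ => by
    have hLip : |φ τ - φ s| ≤ ε / 2 := by
      refine (hφ.abs_sub_le hμ hφB hψM hs (hs.trans hτ.1)).trans (le_trans ?_ hρε)
      refine mul_le_mul_of_nonneg_left ?_ hL
      rw [abs_of_nonneg] <;> linarith [hτ.1, hτ.2]
    have hε : 0 ≤ ε / 2 := (abs_nonneg _).trans hLip
    rw [← sq_abs (φ τ)]
    gcongr
    linarith [abs_sub_abs_le_abs_sub (φ s) (φ τ), abs_sub_comm (φ s) (φ τ)]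
  have hint : IntervalIntegrable (fun τ => φ τ ^ 2) MeasureTheory.volume t (t + T) := by
    refine ((hφ.continuousOn.pow 2).mono fun τ hτ => ?_).intervalIntegrable
    rw [uIcc_of_le (by linarith)] at hτ
    exact ht.trans hτ.1
  exact mul_le_integral_of_le_on_Icc (fun τ => sq_nonneg _) hint hts hρ hsT hnear

end IsLowPassSolution

theorem exists_pos_lower_bound_integral_sq {μ c M K B T : ℝ} (hμ : 0 < μ) (hc : 0 < c)
    (hM : 0 < M) (hK : 0 < K) (hT : 0 ≤ T) :
    ∃ T' κ' : ℝ, 0 < T' ∧ 0 < κ' ∧ ∀ ψ ψ' φ : ℝ → ℝ, IsLowPassSolution μ ψ φ →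
      (∀ t, 0 ≤ t → HasDerivWithinAt ψ (ψ' t) (Ici 0) t) → (∀ t, 0 ≤ t → |ψ t| ≤ M) →
      (∀ t, 0 ≤ t → |ψ' t| ≤ K) → |φ 0| ≤ B →
      ∀ t, 0 ≤ t → ∀ a ∈ Icc t (t + T), c ≤ |ψ a| → κ' ≤ ∫ τ in t..(t + T'), φ τ ^ 2 := by
  -- `δ` keeps `ψ` within `c / 2` of `ψ a`; the bounds on `ε` give `2 ε ≤ c δ / 4` and
  -- `μ ε ≤ c / 8`, which force `φ` out of the `ε`-band within time `δ`; `ρ` keeps `φ`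
  -- within `ε / 2` of its value at the exit time.
  set B' := max B (M / μ)
  set L := μ * B' + M
  set δ := c / (2 * K) with hδdef
  set ε := min (c * δ / 8) (c / (8 * μ))
  set ρ := ε / (2 * L) with hρdef
  have hB' : 0 < B' := lt_max_of_lt_right (div_pos hM hμ)
  have hL : 0 < L := by positivity
  have hδ : 0 < δ := by positivity
  have hε : 0 < ε := lt_min (by positivity) (by positivity)
  have hρ : 0 < ρ := by positivity
  have hKδ : K * δ = c / 2 := by rw [hδdef]; field_simp
  have hLρ : L * ρ = ε / 2 := by rw [hρdef]; field_simp
  refine ⟨T + δ + ρ, (ε / 2) ^ 2 * ρ, by positivity, by positivity, ?_⟩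
  intro ψ ψ' φ hφ hψ hψM hψ'K hφ0 t ht a ha hca
  have ha0 : 0 ≤ a := ht.trans ha.1
  have hψa : ∀ τ ∈ Icc a (a + δ), |ψ τ - ψ a| ≤ c / 2 := fun τ hτ => calc
    |ψ τ - ψ a| ≤ K * |τ - a| :=
      abs_image_sub_le_of_abs_hasDerivWithinAt_le hψ hψ'K ha0 (ha0.trans hτ.1)
    _ ≤ K * δ := by gcongr; rw [abs_of_nonneg] <;> linarith [hτ.1, hτ.2]
    _ = c / 2 := hKδ
  have hforce : 2 * ε < (c / 2 - μ * ε) * δ := by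
    have h₁ : ε ≤ c * δ / 8 := min_le_left _ _
    have h₂ : μ * ε ≤ c / 8 := calc
      μ * ε ≤ μ * (c / (8 * μ)) := by gcongr; exact min_le_right _ _
      _ = c / 8 := by field_simp
    nlinarith
  obtain ⟨s, hs, hεs⟩ := hφ.exists_le_abs_of_le_abs hμ.le ha0 hδ.le hψa hca hforce
  have hφB : ∀ τ, 0 ≤ τ → |φ τ| ≤ B' := fun τ hτ =>
    (hφ.abs_le_max hμ hψM hτ).trans (max_le_max_right _ hφ0)
  exact hφ.mul_le_integral_sq hμ.le hφB hψM hρ.le hLρ.le hεs ht (ha.1.trans hs.1)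
    (by linarith [ha.2, hs.2])

section InnerProductSpace

variable {X : Type*} [NormedAddCommGroup X] [InnerProductSpace ℝ X]

theorem isPEId_of_norm_eq_one {z : ℝ → X} {T κ : ℝ} (hT : 0 < T) (hκ : 0 < κ)
    (hz : ∀ x : X, ‖x‖ = 1 → ∀ t : ℝ, 0 ≤ t → κ ≤ ∫ τ in t..(t + T), inner ℝ (z τ) x ^ 2) :
    IsPEId z := by
  refine ⟨T, κ, hT, hκ, fun x t ht => ?_⟩
  rcases eq_or_ne x 0 with rfl | hx
  · simp
  have hnx : 0 < ‖x‖ := norm_pos_iff.2 hx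
  have hunit := hz (‖x‖⁻¹ • x) (by rw [norm_smul, norm_inv, norm_norm, inv_mul_cancel₀ hnx.ne'])
    t ht
  simp only [real_inner_smul_right, mul_pow, intervalIntegral.integral_const_mul] at hunit
  rwa [inv_pow, ← div_eq_inv_mul, le_div_iff₀ (by positivity)] at hunit

theorem isLowPassSolution_inner {μ : ℝ} {g z : ℝ → X}
    (hz : ∀ t : ℝ, 0 ≤ t → HasDerivWithinAt z (-μ • z t + g t) (Ici 0) t) (x : X) :
    IsLowPassSolution μ (fun t => inner ℝ (g t) x) (fun t => inner ℝ (z t) x) := fun t ht => by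
  simpa [inner_add_left, real_inner_smul_left] using
    (hz t ht).inner ℝ (hasDerivWithinAt_const t (Ici 0) x)

end InnerProductSpace

theorem pe_preserved_by_low_pass_filter_general
    {X : Type*} [NormedAddCommGroup X] [InnerProductSpace ℝ X]
    (μ : ℝ) (hμ : 0 < μ)
    (g gd : ℝ → X)
    (hg : ∀ t : ℝ, 0 ≤ t → HasDerivWithinAt g (gd t) (Ici 0) t)
    (hgb : ∃ M : ℝ, ∀ t : ℝ, 0 ≤ t → ‖g t‖ ≤ M)
    (hgdb : ∃ M : ℝ, ∀ t : ℝ, 0 ≤ t → ‖gd t‖ ≤ M)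
    (hPE : IsPEId g)
    (z : ℝ → X)
    (hz : ∀ t : ℝ, 0 ≤ t → HasDerivWithinAt z (-μ • z t + g t) (Ici 0) t) :
    IsPEId z := by
  obtain ⟨T, κ, hT, hκ, hgPE⟩ := hPE
  obtain ⟨M, hM, hgM⟩ := exists_pos_bound_on_Ici hgb
  obtain ⟨K, hK, hgdK⟩ := exists_pos_bound_on_Ici hgdb
  obtain ⟨T', κ', hT', hκ', hlow⟩ := exists_pos_lower_bound_integral_sq (B := ‖z 0‖) hμ
    (Real.sqrt_pos.2 (by positivity : 0 < κ / (2 * T))) hM hK hT.le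
  refine isPEId_of_norm_eq_one hT' hκ' fun x hx t ht => ?_
  have hinner (v : X) : |inner ℝ v x| ≤ ‖v‖ :=
    (abs_real_inner_le_norm v x).trans_eq (by rw [hx, mul_one])
  have hψ (τ : ℝ) (hτ : 0 ≤ τ) :
      HasDerivWithinAt (fun σ => inner ℝ (g σ) x) (inner ℝ (gd τ) x) (Ici 0) τ := by
    simpa using (hg τ hτ).inner ℝ (hasDerivWithinAt_const τ (Ici 0) x)
  have hψc : ContinuousOn (fun τ => inner ℝ (g τ) x ^ 2) (Icc t (t + T)) := fun τ hτ =>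
    ((hψ τ (ht.trans hτ.1)).continuousWithinAt.pow 2).mono fun σ hσ => ht.trans hσ.1
  obtain ⟨a, ha, hca⟩ := exists_sqrt_le_abs_of_le_integral_sq hT hκ
    (hψc.intervalIntegrable_of_Icc (by linarith)) (by simpa [hx] using hgPE x t ht)
  exact hlow _ _ _ (isLowPassSolution_inner hz x) hψ (fun τ hτ => (hinner _).trans (hgM τ hτ))
    (fun τ hτ => (hinner _).trans (hgdK τ hτ)) (hinner _) t ht a ha hca

/-- **First-order low-pass filtering preserves persistence of excitation** (Lemma A(f)).
Let `X` be a finite-dimensional real inner product space, `μ > 0`, and `g : [0,∞) → X`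
a continuously differentiable signal that is bounded, has bounded derivative, and is PE
with respect to `Id_X`. Then every continuously differentiable solution `z : [0,∞) → X`
of `dz/dt = −μ z(t) + g(t)` on `[0,∞)` is also PE with respect to `Id_X`. -/
theorem pe_preserved_by_low_pass_filter
    {X : Type*} [NormedAddCommGroup X] [InnerProductSpace ℝ X] [FiniteDimensional ℝ X]
    (μ : ℝ) (hμ : 0 < μ)
    (g gd : ℝ → X)
    (hg : ∀ t : ℝ, 0 ≤ t → HasDerivWithinAt g (gd t) (Ici 0) t)
    (hgd : ContinuousOn gd (Ici 0))
    (hgb : ∃ M : ℝ, ∀ t : ℝ, 0 ≤ t → ‖g t‖ ≤ M)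
    (hgdb : ∃ M : ℝ, ∀ t : ℝ, 0 ≤ t → ‖gd t‖ ≤ M)
    (hPE : IsPEId g)
    (z : ℝ → X)
    (hz : ∀ t : ℝ, 0 ≤ t → HasDerivWithinAt z (-μ • z t + g t) (Ici 0) t) :
    IsPEId z :=
  pe_preserved_by_low_pass_filter_general μ hμ g gd hg hgb hgdb hPE z hz
end

section
/- (No signal can be persistently exciting with respect to the identity on an infinite-dimensional Hilbert space, Remark 3.2) Let X be an infinite-dimensional real Hilbert space. Then there do not exist a continuous signal g : [0,∞) → X and constants T, κ > 0 such that ∫_0^T ⟨g(τ),x⟩² dτ ≥ κ‖x‖² for all x ∈ X. In particular, no continuous signal g : [0,∞) → X is PE with respect to the identity operator Id_X. -/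
/-! Gram–Schmidt gives an orthonormal sequence `eₙ` in `X`. It has `‖eₙ‖ = 1`, but by Bessel's
inequality `⟪g τ, eₙ⟫ → 0` for every `τ`, with `⟪g τ, eₙ⟫² ≤ ‖g τ‖²`. Dominated convergence then
sends `∫ ⟪g τ, eₙ⟫² dτ` to `0`, so no `κ > 0` can bound it from below by `κ ‖eₙ‖² = κ`. -/

open Set

open Filter Topology intervalIntegral MeasureTheory
open scoped RealInnerProductSpace

theorem exists_orthonormal_nat {𝕜 E : Type*} [RCLike 𝕜] [NormedAddCommGroup E]
    [InnerProductSpace 𝕜 E] (h : ¬ FiniteDimensional 𝕜 E) : ∃ e : ℕ → E, Orthonormal 𝕜 e := by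
  let b := Module.Basis.ofVectorSpace 𝕜 E
  have : Infinite (Module.Basis.ofVectorSpaceIndex 𝕜 E) := by
    by_contra hfin
    have := not_infinite_iff_finite.mp hfin
    exact h b.finiteDimensional_of_finite
  let f := Infinite.natEmbedding (Module.Basis.ofVectorSpaceIndex 𝕜 E)
  exact ⟨_, InnerProductSpace.gramSchmidtNormed_orthonormal (b.linearIndependent.comp f f.injective)⟩

section Orthonormal

variable {X : Type*} [NormedAddCommGroup X] [InnerProductSpace ℝ X] {e : ℕ → X}

theorem Orthonormal.tendsto_inner_sq_atTop_zero (he : Orthonormal ℝ e) (x : X) :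
    Tendsto (fun n => ⟪x, e n⟫ ^ 2) atTop (𝓝 0) := by
  simpa only [Real.norm_eq_abs, sq_abs, real_inner_comm] using
    (he.inner_products_summable x).tendsto_atTop_zero

theorem Orthonormal.inner_sq_le_norm_sq (he : Orthonormal ℝ e) (x : X) (n : ℕ) :
    ⟪x, e n⟫ ^ 2 ≤ ‖x‖ ^ 2 := by
  simpa only [he.1 n, mul_one, sq_abs] using
    pow_le_pow_left₀ (abs_nonneg _) (abs_real_inner_le_norm x (e n)) 2

theorem Orthonormal.tendsto_integral_inner_sq_atTop_zero (he : Orthonormal ℝ e) {g : ℝ → X}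
    {a b : ℝ} (hg : ContinuousOn g (uIcc a b)) :
    Tendsto (fun n => ∫ τ in a..b, ⟪g τ, e n⟫ ^ 2) atTop (𝓝 0) := by
  have hmeas : ∀ n, ContinuousOn (fun τ => ⟪g τ, e n⟫ ^ 2) (uIcc a b) := fun n =>
    (hg.inner continuousOn_const).pow 2
  simpa using tendsto_integral_filter_of_dominated_convergence (fun τ => ‖g τ‖ ^ 2)
    (Eventually.of_forall fun n =>
      ((hmeas n).mono uIoc_subset_uIcc).aestronglyMeasurable measurableSet_uIoc)
    (Eventually.of_forall fun n => ae_of_all _ fun τ _ => by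
      simpa only [Real.norm_eq_abs, abs_pow, sq_abs] using he.inner_sq_le_norm_sq (g τ) n)
    ((hg.norm.pow 2).intervalIntegrable)
    (ae_of_all _ fun τ _ => he.tendsto_inner_sq_atTop_zero (g τ))

end Orthonormal

theorem not_forall_le_integral_inner_sq {X : Type*} [NormedAddCommGroup X]
    [InnerProductSpace ℝ X] (hX : ¬ FiniteDimensional ℝ X) {g : ℝ → X} {a b κ : ℝ}
    (hg : ContinuousOn g (uIcc a b)) (hκ : 0 < κ) :
    ¬ ∀ x : X, κ * ‖x‖ ^ 2 ≤ ∫ τ in a..b, ⟪g τ, x⟫ ^ 2 := by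
  intro h
  obtain ⟨e, he⟩ := exists_orthonormal_nat hX
  have : κ ≤ 0 := ge_of_tendsto' (he.tendsto_integral_inner_sq_atTop_zero hg) fun n => by
    simpa only [he.1 n, one_pow, mul_one] using h (e n)
  exact this.not_gt hκ

theorem no_pe_wrt_identity_in_infinite_dimension_general
    {X : Type*} [NormedAddCommGroup X] [InnerProductSpace ℝ X]
    (hX : ¬ FiniteDimensional ℝ X) :
    (¬ ∃ (g : ℝ → X) (T κ : ℝ), ContinuousOn g (Ici 0) ∧ 0 < T ∧ 0 < κ ∧
        ∀ x : X, κ * ‖x‖ ^ 2 ≤ ∫ τ in (0:ℝ)..T, (inner ℝ (g τ) x : ℝ) ^ 2) ∧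
      ∀ g : ℝ → X, ContinuousOn g (Ici 0) → ¬ IsPEId g := by
  have uIcc_subset {T : ℝ} (hT : 0 < T) : uIcc 0 T ⊆ Ici 0 :=
    uIcc_of_le hT.le ▸ Icc_subset_Ici_self
  refine ⟨?_, ?_⟩
  · rintro ⟨g, T, κ, hg, hT, hκ, h⟩
    exact not_forall_le_integral_inner_sq hX (hg.mono (uIcc_subset hT)) hκ h
  · rintro g hg ⟨T, κ, hT, hκ, h⟩
    exact not_forall_le_integral_inner_sq hX (hg.mono (uIcc_subset hT)) hκ fun x => by
      simpa only [zero_add] using h x 0 le_rfl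

/-- **No signal can be persistently exciting with respect to the identity on an
infinite-dimensional Hilbert space** (Remark 3.2). There are no continuous `g : [0,∞) → X`
and constants `T, κ > 0` with `∫_0^T ⟨g(τ),x⟩² dτ ≥ κ‖x‖²` for all `x ∈ X`; in particular,
no continuous signal is PE with respect to `Id_X`. -/
theorem no_pe_wrt_identity_in_infinite_dimension
    {X : Type*} [NormedAddCommGroup X] [InnerProductSpace ℝ X] [CompleteSpace X]
    (hX : ¬ FiniteDimensional ℝ X) :
    (¬ ∃ (g : ℝ → X) (T κ : ℝ), ContinuousOn g (Ici 0) ∧ 0 < T ∧ 0 < κ ∧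
        ∀ x : X, κ * ‖x‖ ^ 2 ≤ ∫ τ in (0:ℝ)..T, (inner ℝ (g τ) x : ℝ) ^ 2) ∧
      ∀ g : ℝ → X, ContinuousOn g (Ici 0) → ¬ IsPEId g :=
  no_pe_wrt_identity_in_infinite_dimension_general hX
end

section
/- (An explicit persistently exciting signal in ℓ², Remark 3.3) Let X = ℓ²(ℕ,ℝ) be the real Hilbert space of square-summable real sequences. Define g : [0,∞) → X by g(τ) = (sin((k+1)τ)/(k+1)²)_{k∈ℕ} and P : X → X by (Px)_k = x_k/(k+1)². Then g(τ) indeed lies in ℓ² for every τ, g is continuous, P is a bounded linear operator, and g is PE with respect to P with constants (2π, π), i.e. for all t ≥ 0 and all x ∈ ℓ²(ℕ,ℝ), ∫_t^{t+2π} (Σ_{k∈ℕ} sin((k+1)τ)·x_k/(k+1)²)² dτ ≥ π · Σ_{k∈ℕ} x_k²/(k+1)⁴. -/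
/-!
Write `c k = x k / (k + 1) ^ 2`, so that `⟨g τ, x⟩ = ∑ c k sin ((k + 1) τ)` and
`‖P x‖² = ∑ (c k)²`. Since `c` is absolutely summable, the square of this sine series is an
absolutely convergent double series that may be integrated term by term over `[t, t + 2π]`,
where the functions `sin ((k + 1) τ)` are orthogonal with squared norm `π`. Hence the PE
inequality holds with equality for every `t`.
-/

open Real

theorem integral_cos_int_mul_of_ne_zero {z : ℤ} (hz : z ≠ 0) (t : ℝ) :
    ∫ τ in t..t + 2 * π, cos (z * τ) = 0 := by
  have hz' : (z : ℝ) ≠ 0 := Int.cast_ne_zero.mpr hz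
  rw [intervalIntegral.integral_comp_mul_left (fun τ => cos τ) hz', integral_cos, mul_add,
    sin_add_int_mul_two_pi, sub_self, smul_zero]

theorem integral_sin_mul_sin_of_nat (m n : ℕ) (t : ℝ) :
    ∫ τ in t..t + 2 * π, sin ((m + 1) * τ) * sin ((n + 1) * τ) = if m = n then π else 0 := by
  have product_to_sum (τ : ℝ) : sin ((m + 1) * τ) * sin ((n + 1) * τ) =
      (cos (((m - n : ℤ) : ℝ) * τ) - cos (((m + n + 2 : ℤ) : ℝ) * τ)) / 2 := by
    push_cast
    rw [show (m - n : ℝ) * τ = (m + 1) * τ - (n + 1) * τ by ring,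
      show (m + n + 2 : ℝ) * τ = (m + 1) * τ + (n + 1) * τ by ring, cos_sub, cos_add]
    ring
  have hcont (z : ℤ) :
      IntervalIntegrable (fun τ => cos (z * τ)) MeasureTheory.volume t (t + 2 * π) :=
    (continuous_cos.comp (continuous_const.mul continuous_id)).intervalIntegrable _ _
  simp_rw [product_to_sum]
  rw [intervalIntegral.integral_div, intervalIntegral.integral_sub (hcont _) (hcont _),
    integral_cos_int_mul_of_ne_zero (z := m + n + 2) (by omega)]
  split_ifs with h
  · simp [h]
  · rw [integral_cos_int_mul_of_ne_zero (by omega)]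
    simp

theorem integral_sq_tsum_mul_sin {c : ℕ → ℝ} (hc : Summable fun k => |c k|) (t : ℝ) :
    ∫ τ in t..t + 2 * π, (∑' k, c k * sin ((k + 1) * τ)) ^ 2 = π * ∑' k, c k ^ 2 := by
  let F : ℕ × ℕ → ℝ → ℝ := fun p τ =>
    c p.1 * sin ((p.1 + 1) * τ) * (c p.2 * sin ((p.2 + 1) * τ))
  have hterm (τ : ℝ) : Summable fun k => ‖c k * sin ((k + 1) * τ)‖ :=
    hc.of_nonneg_of_le (fun _ => norm_nonneg _) fun k => by
      simpa [abs_mul] using mul_le_of_le_one_right (abs_nonneg (c k)) (abs_sin_le_one _)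
  have hsq (τ : ℝ) : (∑' k, c k * sin ((k + 1) * τ)) ^ 2 = ∑' p, F p τ := by
    rw [sq, tsum_mul_tsum_of_summable_norm (hterm τ) (hterm τ)]
  have hbound (p : ℕ × ℕ) (τ : ℝ) : ‖F p τ‖ ≤ |c p.1| * |c p.2| := by
    simp only [F, norm_mul, Real.norm_eq_abs]
    gcongr <;> exact mul_le_of_le_one_right (abs_nonneg _) (abs_sin_le_one _)
  have hbound_summable : Summable fun p : ℕ × ℕ => |c p.1| * |c p.2| :=
    summable_mul_of_summable_norm (f := fun k => |c k|) (g := fun k => |c k|)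
      (by simpa using hc) (by simpa using hc)
  have hswap : HasSum (fun p => ∫ τ in t..t + 2 * π, F p τ)
      (∫ τ in t..t + 2 * π, (∑' k, c k * sin ((k + 1) * τ)) ^ 2) := by
    simp_rw [hsq]
    refine intervalIntegral.hasSum_integral_of_dominated_convergence (fun p _ => |c p.1| * |c p.2|)
      (fun p => ?_) (fun p => .of_forall fun τ _ => hbound p τ)
      (.of_forall fun _ _ => hbound_summable) intervalIntegrable_const
      (.of_forall fun τ _ => (hbound_summable.of_norm_bounded (hbound · τ)).hasSum)
    exact (by fun_prop : Continuous (F p)).aestronglyMeasurable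
  have hdiag (p : ℕ × ℕ) :
      ∫ τ in t..t + 2 * π, F p τ = if p.1 = p.2 then c p.1 ^ 2 * π else 0 := by
    simp only [F, mul_mul_mul_comm (c p.1), intervalIntegral.integral_const_mul,
      integral_sin_mul_sin_of_nat]
    split_ifs with h
    · rw [h, sq]
    · rw [mul_zero]
  simp_rw [hdiag] at hswap
  rw [← Function.Injective.hasSum_iff (g := fun k : ℕ => (k, k)) (fun _ _ h => congrArg Prod.fst h)
    fun p hp => if_neg fun h => hp ⟨p.1, Prod.ext rfl h⟩] at hswap
  simp only [Function.comp_def, if_true] at hswap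
  rw [← hswap.tsum_eq, tsum_mul_right, mul_comm]

section

variable {ι : Type*}

theorem memℓp_two_iff_summable_sq {f : ι → ℝ} : Memℓp f 2 ↔ Summable fun i => f i ^ 2 := by
  rw [memℓp_gen_iff (by norm_num)]
  norm_num [sq_abs]

namespace lp

theorem norm_sq_eq_tsum_sq (x : lp (fun _ : ι => ℝ) 2) : ‖x‖ ^ 2 = ∑' i, x i ^ 2 := by
  rw [← real_inner_self_eq_norm_sq, lp.inner_eq_tsum]
  simp [sq]

theorem real_inner_eq_tsum (x y : lp (fun _ : ι => ℝ) 2) : inner ℝ x y = ∑' i, x i * y i := by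
  rw [lp.inner_eq_tsum]
  simp [mul_comm]

theorem lipschitzWith_of_abs_sub_le {α : Type*} [PseudoMetricSpace α]
    {f : α → lp (fun _ : ι => ℝ) 2} {L : ι → ℝ} (hL : Summable fun i => L i ^ 2)
    (hf : ∀ a b i, |f a i - f b i| ≤ L i * dist a b) :
    LipschitzWith (Real.toNNReal √(∑' i, L i ^ 2)) f := by
  refine LipschitzWith.of_dist_le' fun a b => ?_
  rw [dist_eq_norm, ← pow_le_pow_iff_left₀ (norm_nonneg _) (by positivity) two_ne_zero,
    norm_sq_eq_tsum_sq, mul_pow, sq_sqrt (tsum_nonneg fun i => sq_nonneg _), ← tsum_mul_right]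
  refine Summable.tsum_le_tsum (fun i => ?_) (memℓp_two_iff_summable_sq.1 (lp.memℓp _))
    (hL.mul_right _)
  rw [lp.coeFn_sub, Pi.sub_apply, ← mul_pow, ← sq_abs]
  exact pow_le_pow_left₀ (abs_nonneg _) (hf a b i) 2

variable {p : ENNReal} [Fact (1 ≤ p)]

noncomputable def diagonalCLM (w : ι → ℝ) {C : ℝ} (hw : ∀ i, |w i| ≤ C) :
    lp (fun _ : ι => ℝ) p →L[ℝ] lp (fun _ : ι => ℝ) p :=
  LinearMap.mkContinuous
    { toFun x := ⟨fun i => w i * x i, ((lp.memℓp x).norm.const_smul C).mono fun i => by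
        simp only [norm_mul, Real.norm_eq_abs, Pi.smul_apply, smul_eq_mul]
        exact mul_le_mul_of_nonneg_right (hw i) (abs_nonneg _)⟩
      map_add' x y := lp.ext <| funext fun i => mul_add (w i) (x i) (y i)
      map_smul' r x := lp.ext <| funext fun i => mul_left_comm (w i) r (x i) }
    |C| fun x => by
      rw [← Real.norm_eq_abs, ← norm_smul]
      exact lp.norm_mono (zero_lt_one.trans_le Fact.out).ne' fun i => by
        simp only [LinearMap.coe_mk, AddHom.coe_mk, norm_mul, lp.coeFn_smul, Pi.smul_apply,
          norm_smul]
        exact mul_le_mul_of_nonneg_right ((hw i).trans (le_abs_self C)) (norm_nonneg _)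

@[simp]
theorem diagonalCLM_apply (w : ι → ℝ) {C : ℝ} (hw : ∀ i, |w i| ≤ C) (x : lp (fun _ : ι => ℝ) p)
    (i : ι) : diagonalCLM w hw x i = w i * x i :=
  rfl

end lp

end

theorem summable_one_div_nat_add_one_sq : Summable fun k : ℕ => (1 / ((k : ℝ) + 1)) ^ 2 := by
  simp_rw [div_pow, one_pow]
  exact_mod_cast (summable_nat_add_iff 1).2 (Real.summable_one_div_nat_pow.2 one_lt_two)

noncomputable def sinSignal (τ : ℝ) : lp (fun _ : ℕ => ℝ) 2 :=
  ⟨fun k => sin ((k + 1) * τ) / (k + 1) ^ 2,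
    (memℓp_two_iff_summable_sq (f := fun k : ℕ => 1 / ((k : ℝ) + 1)) |>.2
      summable_one_div_nat_add_one_sq).mono fun k => by
      have hk : (1 : ℝ) ≤ k + 1 := by simp
      rw [Real.norm_eq_abs, abs_div, abs_sq]
      calc |sin ((k + 1) * τ)| / ((k : ℝ) + 1) ^ 2 ≤ 1 / ((k : ℝ) + 1) ^ 2 := by
            gcongr; exact abs_sin_le_one _
        _ ≤ 1 / ((k : ℝ) + 1) := by gcongr; exact le_self_pow₀ hk two_ne_zero⟩

theorem lipschitzWith_sinSignal :
    LipschitzWith (Real.toNNReal √(∑' k : ℕ, (1 / ((k : ℝ) + 1)) ^ 2)) sinSignal := by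
  refine lp.lipschitzWith_of_abs_sub_le summable_one_div_nat_add_one_sq fun a b k => ?_
  have hk : (0 : ℝ) < k + 1 := by positivity
  change |sin ((k + 1) * a) / ((k : ℝ) + 1) ^ 2 - sin ((k + 1) * b) / ((k : ℝ) + 1) ^ 2| ≤ _
  rw [div_sub_div_same, abs_div, abs_sq, div_le_iff₀ (by positivity)]
  calc |sin ((k + 1) * a) - sin ((k + 1) * b)| ≤ |(k + 1) * a - (k + 1) * b| :=
        abs_sin_sub_sin_le _ _
    _ = 1 / ((k : ℝ) + 1) * dist a b * ((k : ℝ) + 1) ^ 2 := by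
        rw [← mul_sub, abs_mul, abs_of_pos hk, Real.dist_eq]
        field_simp

theorem inner_sinSignal (τ : ℝ) (x : lp (fun _ : ℕ => ℝ) 2) :
    inner ℝ (sinSignal τ) x = ∑' k : ℕ, x k / ((k : ℝ) + 1) ^ 2 * sin ((k + 1) * τ) := by
  rw [lp.real_inner_eq_tsum]
  exact tsum_congr fun k => div_mul_comm _ _ _

theorem summable_abs_div_nat_add_one_sq (x : lp (fun _ : ℕ => ℝ) 2) :
    Summable fun k : ℕ => |x k / ((k : ℝ) + 1) ^ 2| := by
  refine (summable_one_div_nat_add_one_sq.mul_left ‖x‖).of_nonneg_of_le (fun _ => abs_nonneg _)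
    fun k => ?_
  rw [abs_div, abs_sq, div_pow, one_pow, ← div_eq_mul_one_div]
  gcongr
  exact lp.norm_apply_le_norm two_ne_zero x k

/-- **An explicit persistently exciting signal in ℓ²** (Remark 3.3).
In `X = ℓ²(ℕ, ℝ)`, the signal `g(τ) = (sin((k+1)τ)/(k+1)²)_{k∈ℕ}` is well defined (lies in
`ℓ²`), continuous, the map `P` given coordinatewise by `(Px)_k = x_k/(k+1)²` is a bounded
linear operator, and `g` is PE with respect to `P` with constants `(2π, π)`:
`∫_t^{t+2π} ⟨g(τ), x⟩² dτ ≥ π ‖P x‖²` for all `t ≥ 0` and `x ∈ ℓ²(ℕ, ℝ)`. -/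
theorem lp_pe_example :
    ∃ (g : ℝ → lp (fun _ : ℕ => ℝ) 2) (P : lp (fun _ : ℕ => ℝ) 2 →L[ℝ] lp (fun _ : ℕ => ℝ) 2),
      (∀ (τ : ℝ) (k : ℕ), g τ k = Real.sin ((k + 1) * τ) / (k + 1) ^ 2) ∧
      (∀ (x : lp (fun _ : ℕ => ℝ) 2) (k : ℕ), P x k = x k / (k + 1) ^ 2) ∧
      Continuous g ∧
      ∀ (x : lp (fun _ : ℕ => ℝ) 2) (t : ℝ), 0 ≤ t →
        Real.pi * ‖P x‖ ^ 2 ≤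
          ∫ τ in t..(t + 2 * Real.pi), (inner ℝ (g τ) x : ℝ) ^ 2 := by
  have hw (k : ℕ) : |1 / ((k : ℝ) + 1) ^ 2| ≤ 1 := by
    rw [abs_of_pos (by positivity)]
    exact div_le_one_of_le₀ (one_le_pow₀ (by simp)) (by positivity)
  refine ⟨sinSignal, lp.diagonalCLM _ hw, fun _ _ => rfl, fun x k => one_div_mul_eq_div _ _,
    lipschitzWith_sinSignal.continuous, fun x t _ => le_of_eq ?_⟩
  simp_rw [inner_sinSignal, lp.norm_sq_eq_tsum_sq, lp.diagonalCLM_apply, one_div_mul_eq_div]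
  exact (integral_sq_tsum_mul_sin (summable_abs_div_nat_add_one_sq x) t).symm
end
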